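/- The type system for uniflow diagrams is coherent up to the anchoring relation: if Γ | Δ ⊢ M : m → n | R₁ and Γ | Δ ⊢ M : m → n | R₂ are both derivable, then the denoted framed point DAGs are equal (only the anchoring partial orders R₁ and R₂ may differ), and moreover m, n are determined by M and Γ, Δ. -/
import Mathlib


/-- A labelled interfaced graph: a directed graph with a partial labelling and `m` input
and `n` output interface vertices. -/
structure Dia (L : Type) (m n : ℕ) : Type 1 where
  V : Type
  E : V → V → Prop
  label : V → Option L
  ins : Fin m → V
  outs : Fin n → V

/-- Isomorphism of labelled interfaced graphs. -/
def Iso {L : Type} {m n : ℕ} (D₁ D₂ : Dia L m n) : Prop :=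
  ∃ e : D₁.V ≃ D₂.V,
    (∀ u v, D₁.E u v ↔ D₂.E (e u) (e v)) ∧
    (∀ v, D₂.label (e v) = D₁.label v) ∧
    (∀ i, e (D₁.ins i) = D₂.ins i) ∧
    (∀ j, e (D₁.outs j) = D₂.outs j)

/-- `D₂` is obtained from `D₁` by removing an interior unlabelled wire node `w` with unique
in-edge `(u, w)` and unique out-edge `(w, v)`, replacing them by the edge `(u, v)`. -/
def IsWireRemoval {L : Type} {m n : ℕ} (D₁ D₂ : Dia L m n) : Prop :=
  ∃ (w u v : D₁.V), D₁.label w = none ∧ D₁.E u w ∧ D₁.E w v ∧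
    (∀ z, D₁.E z w → z = u) ∧ (∀ z, D₁.E w z → z = v) ∧
    ∃ (hin : ∀ i, D₁.ins i ≠ w) (hout : ∀ j, D₁.outs j ≠ w),
      Iso D₂ ⟨{z : D₁.V // z ≠ w},
        fun a b => D₁.E a.1 b.1 ∨ (a.1 = u ∧ b.1 = v),
        fun a => D₁.label a.1,
        fun i => ⟨D₁.ins i, hin i⟩,
        fun j => ⟨D₁.outs j, hout j⟩⟩

/-- Equality of diagrams: the equivalence generated by isomorphism and wire homeomorphism. -/
def DiaEq {L : Type} {m n : ℕ} (D₁ D₂ : Dia L m n) : Prop :=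
  Relation.EqvGen (fun A B => Iso A B ∨ IsWireRemoval A B ∨ IsWireRemoval B A) D₁ D₂

/-- The uniflow syntax `M ::= k | i | γ | M;M | M⊗M | x | x̄ȳ.M`, intrinsically typed by
input/output arities. `K` is the signature of constants with arities `ar`. `varIn x` is an
input variable (type 1 → 0), `varOut x` an output variable (type 0 → 1). -/
inductive Tm (K : Type) (ar : K → ℕ × ℕ) : ℕ → ℕ → Type
  | idN (n : ℕ) : Tm K ar n n
  | symN (m n : ℕ) : Tm K ar (m + n) (n + m)
  | konst (k : K) : Tm K ar (ar k).1 (ar k).2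
  | varOut (x : ℕ) : Tm K ar 0 1
  | varIn (x : ℕ) : Tm K ar 1 0
  | comp {a b c : ℕ} : Tm K ar a b → Tm K ar b c → Tm K ar a c
  | tens {a b c d : ℕ} : Tm K ar a b → Tm K ar c d → Tm K ar (a + c) (b + d)
  | link (x y : ℕ) {m n : ℕ} : Tm K ar m n → Tm K ar m n

variable {K : Type} [DecidableEq K] {ar : K → ℕ × ℕ}

/-- The diagrammatic (framed point graph) semantics of uniflow terms.  Labels are either
constants (`Sum.inl`) or variable names (`Sum.inr`).  `link x y M` adds an edge from each
node labelled `x` to each node labelled `y` and erases those labels. -/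
def sem : {m n : ℕ} → Tm K ar m n → Dia (K ⊕ ℕ) m n
  | _, _, .idN n =>
      ⟨Fin n ⊕ Fin n, fun a b => ∃ i, a = .inl i ∧ b = .inr i, fun _ => none, .inl, .inr⟩
  | _, _, .symN m n =>
      ⟨Fin (m + n) ⊕ Fin (n + m),
        fun a b => ∃ (i : Fin (m + n)) (j : Fin (n + m)), a = .inl i ∧ b = .inr j ∧
          ((j : ℕ) = if (i : ℕ) < m then n + (i : ℕ) else (i : ℕ) - m),
        fun _ => none, .inl, .inr⟩
  | _, _, .konst k =>
      ⟨Unit ⊕ (Fin (ar k).1 ⊕ Fin (ar k).2),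
        fun a b => (∃ i, a = .inr (.inl i) ∧ b = .inl ()) ∨
                   (∃ j, a = .inl () ∧ b = .inr (.inr j)),
        fun v => match v with | .inl _ => some (.inl k) | _ => none,
        fun i => .inr (.inl i), fun j => .inr (.inr j)⟩
  | _, _, .varOut x =>
      ⟨Bool, fun a b => a = false ∧ b = true,
        fun v => if v then none else some (.inr x), Fin.elim0, fun _ => true⟩
  | _, _, .varIn x =>
      ⟨Bool, fun a b => a = false ∧ b = true,
        fun v => if v then some (.inr x) else none, fun _ => false, Fin.elim0⟩
  | _, _, .comp M N =>
      let D₁ := sem M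
      let D₂ := sem N
      ⟨D₁.V ⊕ D₂.V,
        fun p q => (∃ u v, p = .inl u ∧ q = .inl v ∧ D₁.E u v) ∨
                   (∃ u v, p = .inr u ∧ q = .inr v ∧ D₂.E u v) ∨
                   (∃ i, p = .inl (D₁.outs i) ∧ q = .inr (D₂.ins i)),
        Sum.elim D₁.label D₂.label,
        fun i => .inl (D₁.ins i), fun j => .inr (D₂.outs j)⟩
  | _, _, .tens M N =>
      let D₁ := sem M
      let D₂ := sem N
      ⟨D₁.V ⊕ D₂.V,
        fun p q => (∃ u v, p = .inl u ∧ q = .inl v ∧ D₁.E u v) ∨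
                   (∃ u v, p = .inr u ∧ q = .inr v ∧ D₂.E u v),
        Sum.elim D₁.label D₂.label,
        Fin.addCases (fun i => .inl (D₁.ins i)) (fun j => .inr (D₂.ins j)),
        Fin.addCases (fun i => .inl (D₁.outs i)) (fun j => .inr (D₂.outs j))⟩
  | _, _, .link x y M =>
      let D := sem M
      ⟨D.V,
        fun a b => D.E a b ∨ (D.label a = some (.inr x) ∧ D.label b = some (.inr y)),
        fun v => if D.label v = some (.inr x) ∨ D.label v = some (.inr y) then none
                 else D.label v,
        D.ins, D.outs⟩

/-- Typing derivations for uniflow diagrams (Figure 2): `Deriv Γ Δ M R` derives the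
judgment `Γ | Δ ⊢ M : m → n | R`, where `Γ` are the input variables, `Δ` the output
variables and `R` the anchoring partial order on `Γ ⊎ Δ`.  The `strengthen` rule can
nondeterministically extend the anchor, provided it stays a partial order. -/
inductive Deriv : Finset ℕ → Finset ℕ → {m n : ℕ} → Tm K ar m n → (ℕ → ℕ → Prop) → Type
  | varOut (x : ℕ) : Deriv {x} ∅ (.varOut x) (fun a b => a = x ∧ b = x)
  | varIn (x : ℕ) : Deriv ∅ {x} (.varIn x) (fun a b => a = x ∧ b = x)
  | idN (n : ℕ) : Deriv ∅ ∅ (.idN n) (fun _ _ => False)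
  | symN (m n : ℕ) : Deriv ∅ ∅ (.symN m n) (fun _ _ => False)
  | konst (k : K) : Deriv ∅ ∅ (.konst k) (fun _ _ => False)
  | comp {Γ₁ Δ₁ Γ₂ Δ₂ : Finset ℕ} {R₁ R₂ : ℕ → ℕ → Prop} {m₁ m₂ n₂ : ℕ}
      {M : Tm K ar m₁ m₂} {N : Tm K ar m₂ n₂} :
      Deriv Γ₁ Δ₁ M R₁ → Deriv Γ₂ Δ₂ N R₂ → Disjoint (Γ₁ ∪ Δ₁) (Γ₂ ∪ Δ₂) →
      Deriv (Γ₁ ∪ Γ₂) (Δ₁ ∪ Δ₂) (.comp M N)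
        (Relation.ReflTransGen (fun a b => R₁ a b ∨ R₂ a b ∨ (a ∈ Γ₁ ∪ Δ₁ ∧ b ∈ Γ₂ ∪ Δ₂)))
  | tens {Γ₁ Δ₁ Γ₂ Δ₂ : Finset ℕ} {R₁ R₂ : ℕ → ℕ → Prop} {m₁ m₂ n₁ n₂ : ℕ}
      {M : Tm K ar m₁ m₂} {N : Tm K ar n₁ n₂} :
      Deriv Γ₁ Δ₁ M R₁ → Deriv Γ₂ Δ₂ N R₂ → Disjoint (Γ₁ ∪ Δ₁) (Γ₂ ∪ Δ₂) →
      Deriv (Γ₁ ∪ Γ₂) (Δ₁ ∪ Δ₂) (.tens M N)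
        (Relation.ReflTransGen (fun a b => R₁ a b ∨ R₂ a b))
  | strengthen {Γ Δ : Finset ℕ} {R : ℕ → ℕ → Prop} {m n : ℕ} {M : Tm K ar m n} (x y : ℕ) :
      Deriv Γ Δ M R → x ∈ Γ ∪ Δ → y ∈ Γ ∪ Δ →
      (∀ a b, Relation.ReflTransGen (fun a b => R a b ∨ (a = x ∧ b = y)) a b →
              Relation.ReflTransGen (fun a b => R a b ∨ (a = x ∧ b = y)) b a → a = b) →
      Deriv Γ Δ M (Relation.ReflTransGen (fun a b => R a b ∨ (a = x ∧ b = y)))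
  | link (x y : ℕ) {Γ Δ : Finset ℕ} {R : ℕ → ℕ → Prop} {m n : ℕ} {M : Tm K ar m n} :
      Deriv (insert x Γ) (insert y Δ) M R → x ∉ Γ → y ∉ Δ → R x y →
      Deriv Γ Δ (.link x y M) (fun a b => R a b ∧ a ≠ x ∧ a ≠ y ∧ b ≠ x ∧ b ≠ y)

/-- The diagrammatic semantics of a typing derivation, defined by induction on the
derivation (Section 2). -/
def dsem : {Γ Δ : Finset ℕ} → {m n : ℕ} → {M : Tm K ar m n} → {R : ℕ → ℕ → Prop} →
    Deriv Γ Δ M R → Dia (K ⊕ ℕ) m n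
  | _, _, _, _, _, _, .varOut x =>
      ⟨Bool, fun a b => a = false ∧ b = true,
        fun v => if v then none else some (.inr x), Fin.elim0, fun _ => true⟩
  | _, _, _, _, _, _, .varIn x =>
      ⟨Bool, fun a b => a = false ∧ b = true,
        fun v => if v then some (.inr x) else none, fun _ => false, Fin.elim0⟩
  | _, _, _, _, _, _, .idN n =>
      ⟨Fin n ⊕ Fin n, fun a b => ∃ i, a = .inl i ∧ b = .inr i, fun _ => none, .inl, .inr⟩
  | _, _, _, _, _, _, .symN m n =>
      ⟨Fin (m + n) ⊕ Fin (n + m),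
        fun a b => ∃ (i : Fin (m + n)) (j : Fin (n + m)), a = .inl i ∧ b = .inr j ∧
          ((j : ℕ) = if (i : ℕ) < m then n + (i : ℕ) else (i : ℕ) - m),
        fun _ => none, .inl, .inr⟩
  | _, _, _, _, _, _, .konst k =>
      ⟨Unit ⊕ (Fin (ar k).1 ⊕ Fin (ar k).2),
        fun a b => (∃ i, a = .inr (.inl i) ∧ b = .inl ()) ∨
                   (∃ j, a = .inl () ∧ b = .inr (.inr j)),
        fun v => match v with | .inl _ => some (.inl k) | _ => none,
        fun i => .inr (.inl i), fun j => .inr (.inr j)⟩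
  | _, _, _, _, _, _, .comp d₁ d₂ _ =>
      let D₁ := dsem d₁
      let D₂ := dsem d₂
      ⟨D₁.V ⊕ D₂.V,
        fun p q => (∃ u v, p = .inl u ∧ q = .inl v ∧ D₁.E u v) ∨
                   (∃ u v, p = .inr u ∧ q = .inr v ∧ D₂.E u v) ∨
                   (∃ i, p = .inl (D₁.outs i) ∧ q = .inr (D₂.ins i)),
        Sum.elim D₁.label D₂.label,
        fun i => .inl (D₁.ins i), fun j => .inr (D₂.outs j)⟩
  | _, _, _, _, _, _, .tens d₁ d₂ _ =>
      let D₁ := dsem d₁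
      let D₂ := dsem d₂
      ⟨D₁.V ⊕ D₂.V,
        fun p q => (∃ u v, p = .inl u ∧ q = .inl v ∧ D₁.E u v) ∨
                   (∃ u v, p = .inr u ∧ q = .inr v ∧ D₂.E u v),
        Sum.elim D₁.label D₂.label,
        Fin.addCases (fun i => .inl (D₁.ins i)) (fun j => .inr (D₂.ins j)),
        Fin.addCases (fun i => .inl (D₁.outs i)) (fun j => .inr (D₂.outs j))⟩
  | _, _, _, _, _, _, .strengthen _ _ d _ _ _ => dsem d
  | _, _, _, _, _, _, .link x y d _ _ _ =>
      let D := dsem d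
      ⟨D.V,
        fun a b => D.E a b ∨ (D.label a = some (.inr x) ∧ D.label b = some (.inr y)),
        fun v => if D.label v = some (.inr x) ∨ D.label v = some (.inr y) then none
                 else D.label v,
        D.ins, D.outs⟩


theorem dsem_eq_sem {K : Type} [DecidableEq K] {ar : K → ℕ × ℕ} :
    ∀ {Γ Δ : Finset ℕ} {m n : ℕ} {M : Tm K ar m n} {R : ℕ → ℕ → Prop}
    (d : Deriv Γ Δ M R), dsem d = sem M := by
  intro Γ Δ m n M R d
  induction d with
  | varOut x => rfl
  | varIn x => rfl
  | idN n => rfl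
  | symN m n => rfl
  | konst k => rfl
  | comp d₁ d₂ h ih₁ ih₂ => simp only [dsem, sem]; rw [ih₁, ih₂]
  | tens d₁ d₂ h ih₁ ih₂ => simp only [dsem, sem]; rw [ih₁, ih₂]
  | strengthen x y d hx hy hpo ih => simpa only [dsem] using ih
  | link x y d hx hy hR ih => simp only [dsem, sem]; rw [ih]

/-- coherence of the uniflow type system, Lemma 2.3: any two typing
derivations of the same term `M` in the same contexts `Γ | Δ` (of the same arity
`m → n`, as recorded in the intrinsic typing) yield the same uniflow diagram, even
though the anchoring partial orders `R₁` and `R₂` may differ. -/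
theorem stmt_19 {K : Type} [DecidableEq K] {ar : K → ℕ × ℕ} {Γ Δ : Finset ℕ}
    {m n : ℕ} {M : Tm K ar m n} {R₁ R₂ : ℕ → ℕ → Prop}
    (d₁ : Deriv Γ Δ M R₁) (d₂ : Deriv Γ Δ M R₂) :
    DiaEq (dsem d₁) (dsem d₂) := by
  rw [dsem_eq_sem d₁, dsem_eq_sem d₂]
  exact Relation.EqvGen.refl _
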